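/- arXiv:2003.10392 — 6 statements merged into one kernel-verified Lean document; each statement's English description precedes it below -/
import Mathlib

section
/- For c ≥ 1, the minimum of w₁r₁² + w₂r₂² over (w₁,w₂,r₁,r₂) ∈ ℝ⁴ subject to w₁ + w₂ = 1, w₁r₁ + w₂r₂ = 0, |w₁| + |w₂| ≤ c, and |r₁|, |r₂| ≤ 1 equals −(c−1)/(c+1). -/
open Matrix BigOperators

theorem stmt_1 (c : ℝ) (hc : 1 ≤ c) :
    IsLeast {t : ℝ | ∃ w₁ w₂ r₁ r₂ : ℝ,
      w₁ + w₂ = 1 ∧ w₁ * r₁ + w₂ * r₂ = 0 ∧ |w₁| + |w₂| ≤ c ∧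
      |r₁| ≤ 1 ∧ |r₂| ≤ 1 ∧ t = w₁ * r₁ ^ 2 + w₂ * r₂ ^ 2}
      (-(c - 1) / (c + 1)) := by
  have hc1 : (0:ℝ) < c + 1 := by linarith
  constructor
  · refine ⟨-(c-1)/2, (c+1)/2, 1, (c-1)/(c+1), by ring, ?_, ?_, ?_, ?_, ?_⟩
    · field_simp; ring
    · rw [abs_of_nonpos (by nlinarith), abs_of_nonneg (by nlinarith)]; nlinarith
    · simp
    · rw [abs_of_nonneg (div_nonneg (by linarith) hc1.le), div_le_one hc1]; linarith
    · field_simp; ring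
  · rintro t ⟨w₁, w₂, r₁, r₂, e1, e2, habs, hr1, hr2, ht⟩
    have key : t = -(r₁ * r₂) := by
      rw [ht]; linear_combination (r₁ + r₂) * e2 - r₁ * r₂ * e1
    rw [key, div_le_iff₀ hc1]
    have hw1 : w₁ * (r₁ - r₂) = -r₂ := by linear_combination e2 - r₂ * e1
    have hw2 : w₂ * (r₁ - r₂) = r₁ := by linear_combination r₁ * e1 - e2
    have a1 : |w₁| * |r₁ - r₂| = |r₂| := by rw [← abs_mul, hw1, abs_neg]
    have a2 : |w₂| * |r₁ - r₂| = |r₁| := by rw [← abs_mul, hw2]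
    have habs2 : |r₁| + |r₂| ≤ c * |r₁ - r₂| := by
      nlinarith [abs_nonneg (r₁ - r₂),
        mul_le_mul_of_nonneg_right habs (abs_nonneg (r₁ - r₂))]
    obtain ⟨g1', g1⟩ := abs_le.mp hr1
    obtain ⟨g2', g2⟩ := abs_le.mp hr2
    rcases le_or_gt (r₁ * r₂) 0 with hp | hp
    · nlinarith
    · rcases lt_or_ge 0 r₁ with hx | hx
      · have hy : 0 < r₂ := by nlinarith
        rw [abs_of_pos hx, abs_of_pos hy] at habs2
        rcases abs_cases (r₁ - r₂) with ⟨h5, h5'⟩ | ⟨h5, h5'⟩ <;> rw [h5] at habs2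
        · nlinarith [mul_nonneg hx.le (show (0:ℝ) ≤ c*(r₁-r₂)-(r₁+r₂) by linarith),
            mul_nonneg (mul_nonneg (sub_nonneg.2 hc) (sub_nonneg.2 g1))
              (show (0:ℝ) ≤ 1 + r₁ by linarith)]
        · nlinarith [mul_nonneg hy.le (show (0:ℝ) ≤ c*(r₂-r₁)-(r₁+r₂) by linarith),
            mul_nonneg (mul_nonneg (sub_nonneg.2 hc) (sub_nonneg.2 g2))
              (show (0:ℝ) ≤ 1 + r₂ by linarith)]
      · have hx' : r₁ < 0 := by nlinarith
        have hy : r₂ < 0 := by nlinarith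
        rw [abs_of_neg hx', abs_of_neg hy] at habs2
        rcases abs_cases (r₁ - r₂) with ⟨h5, h5'⟩ | ⟨h5, h5'⟩ <;> rw [h5] at habs2
        · nlinarith [mul_nonneg (neg_nonneg.2 hy.le) (show (0:ℝ) ≤ c*(r₁-r₂)+(r₁+r₂) by linarith),
            mul_nonneg (mul_nonneg (sub_nonneg.2 hc) (sub_nonneg.2 g2))
              (show (0:ℝ) ≤ 1 + r₂ by linarith)]
        · have A : (0:ℝ) ≤ (-r₁) * (c*(r₂-r₁)+(r₁+r₂)) :=
            mul_nonneg (neg_nonneg.2 hx'.le) (by linarith)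
          have B : (0:ℝ) ≤ ((c-1)*(1-r₁)) * (1+r₁) :=
            mul_nonneg (mul_nonneg (sub_nonneg.2 hc) (sub_nonneg.2 g1)) (by linarith)
          linarith [A, B]
end

section
/- Let S be a symmetric d×d real matrix with smallest eigenvalue λ_min and largest eigenvalue λ_max, and c ≥ 1. Then the minimum of w₁ δ₁ᵀS δ₁ + w₂ δ₂ᵀS δ₂ over w₁+w₂ = 1, |w₁|+|w₂| ≤ c, w₁δ₁ + w₂δ₂ = 0, ‖δ₁‖,‖δ₂‖ ≤ 1 equals min(λ_min, −((c−1)/(c+1))·λ_max, 0). -/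
open Matrix
open scoped MatrixOrder

/-!
If `w₁ • δ₁ + w₂ • δ₂ = 0` with `w₁ ≠ 0`, then `δ₁ = -(w₂ / w₁) • δ₂` and, since `w₁ + w₂ = 1`,
the objective collapses to `(w₂ / w₁) * δ₂ᵀSδ₂`. With both weights nonnegative the objective is a
convex combination of quadratic forms on the unit ball, each at least `min λ_min 0`. With a negative
weight, say `w₂ < 0`, the budget `|w₁| + |w₂| ≤ c` forces `-(c-1)/(c+1) ≤ w₂ / w₁ < 0`, and
`δ₂ᵀSδ₂ ≤ λ_max ‖δ₂‖²` gives the bound `min (-(c-1)/(c+1) * λ_max) 0`. The three candidate values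
are attained at `w = (1, 0)`, at `w = (1/2, 1/2)` with `δ₂` a unit `λ_min`-eigenvector, and at
`w = ((c+1)/2, (1-c)/2)` with `δ₂` a unit `λ_max`-eigenvector.
-/

namespace Matrix

theorem dotProduct_self_nonneg_real {n : Type*} [Fintype n] (v : n → ℝ) : 0 ≤ v ⬝ᵥ v := by
  simpa using dotProduct_star_self_nonneg v

theorem exists_mulVec_eq_smul_of_mem_spectrum {n K : Type*} [Fintype n] [DecidableEq n]
    [Field K] {A : Matrix n n K} {μ : K} (h : μ ∈ spectrum K A) :
    ∃ v, v ≠ 0 ∧ A *ᵥ v = μ • v := by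
  rw [← spectrum_toLin', ← Module.End.hasEigenvalue_iff_mem_spectrum] at h
  obtain ⟨v, hv⟩ := h.exists_hasEigenvector
  exact ⟨v, hv.2, by simpa using hv.apply_eq_smul⟩

theorem IsHermitian.mul_dotProduct_self_le_dotProduct_mulVec {n : Type*} [Fintype n]
    [DecidableEq n] {S : Matrix n n ℝ} (hS : S.IsHermitian) {lo : ℝ}
    (h : ∀ μ ∈ spectrum ℝ S, lo ≤ μ) (v : n → ℝ) : lo * (v ⬝ᵥ v) ≤ v ⬝ᵥ S *ᵥ v := by
  have hpsd := le_iff.1 ((algebraMap_le_iff_le_spectrum hS.isSelfAdjoint).2 h)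
  simpa [sub_mulVec, Algebra.algebraMap_eq_smul_one, smul_mulVec, dotProduct_smul] using
    hpsd.dotProduct_mulVec_nonneg v

theorem IsHermitian.dotProduct_mulVec_le_mul_dotProduct_self {n : Type*} [Fintype n]
    [DecidableEq n] {S : Matrix n n ℝ} (hS : S.IsHermitian) {hi : ℝ}
    (h : ∀ μ ∈ spectrum ℝ S, μ ≤ hi) (v : n → ℝ) : v ⬝ᵥ S *ᵥ v ≤ hi * (v ⬝ᵥ v) := by
  have hpsd := le_iff.1 ((le_algebraMap_iff_spectrum_le hS.isSelfAdjoint).2 h)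
  simpa [sub_mulVec, Algebra.algebraMap_eq_smul_one, smul_mulVec, dotProduct_smul] using
    hpsd.dotProduct_mulVec_nonneg v

theorem exists_dotProduct_self_eq_one_of_mulVec_eq_smul {n : Type*} [Fintype n]
    {S : Matrix n n ℝ} {μ : ℝ} {v : n → ℝ} (hv : v ≠ 0) (h : S *ᵥ v = μ • v) :
    ∃ u, u ⬝ᵥ u = 1 ∧ u ⬝ᵥ S *ᵥ u = μ := by
  have hpos : 0 < v ⬝ᵥ v := by simpa using dotProduct_self_star_pos_iff.2 hv
  have hunit : ((√(v ⬝ᵥ v))⁻¹ • v) ⬝ᵥ ((√(v ⬝ᵥ v))⁻¹ • v) = 1 := by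
    simp only [smul_dotProduct, dotProduct_smul, smul_eq_mul, ← mul_assoc, ← mul_inv,
      Real.mul_self_sqrt hpos.le]
    exact inv_mul_cancel₀ hpos.ne'
  refine ⟨_, hunit, ?_⟩
  rw [mulVec_smul, h, smul_comm, dotProduct_smul, hunit, smul_eq_mul, mul_one]

end Matrix

section SignedSplitting

variable {n : Type*} [Fintype n] {S : Matrix n n ℝ} {c w₁ w₂ : ℝ} {δ₁ δ₂ : n → ℝ}

/-- The paper's `G₂^{-c}(S)` is the infimum of this set. -/
def signedSplittingValues (c : ℝ) (S : Matrix n n ℝ) : Set ℝ :=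
  {t | ∃ (w₁ w₂ : ℝ) (δ₁ δ₂ : n → ℝ),
    w₁ + w₂ = 1 ∧ |w₁| + |w₂| ≤ c ∧ w₁ • δ₁ + w₂ • δ₂ = 0 ∧
    δ₁ ⬝ᵥ δ₁ ≤ 1 ∧ δ₂ ⬝ᵥ δ₂ ≤ 1 ∧
    t = w₁ * (δ₁ ⬝ᵥ S *ᵥ δ₁) + w₂ * (δ₂ ⬝ᵥ S *ᵥ δ₂)}

theorem splitting_value_eq (hw : w₁ + w₂ = 1) (h0 : w₁ • δ₁ + w₂ • δ₂ = 0) (hw₁ : w₁ ≠ 0) :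
    w₁ * (δ₁ ⬝ᵥ S *ᵥ δ₁) + w₂ * (δ₂ ⬝ᵥ S *ᵥ δ₂) = w₂ / w₁ * (δ₂ ⬝ᵥ S *ᵥ δ₂) := by
  have hδ₁ : δ₁ = -(w₂ / w₁) • δ₂ := by
    rw [← inv_smul_smul₀ hw₁ δ₁, eq_neg_of_add_eq_zero_left h0, smul_neg, smul_smul,
      neg_smul, inv_mul_eq_div]
  subst hδ₁
  simp only [mulVec_smul, smul_dotProduct, dotProduct_smul, smul_eq_mul]
  field_simp
  linear_combination w₂ * (δ₂ ⬝ᵥ S *ᵥ δ₂) * hw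

theorem div_mul_mem_signedSplittingValues {u : n → ℝ} (hw : w₁ + w₂ = 1)
    (hc : |w₁| + |w₂| ≤ c) (hw₁ : w₁ ≠ 0) (hw₂ : |w₂| ≤ |w₁|) (hu : u ⬝ᵥ u ≤ 1) :
    w₂ / w₁ * (u ⬝ᵥ S *ᵥ u) ∈ signedSplittingValues c S := by
  have h0 : w₁ • (-(w₂ / w₁) • u) + w₂ • u = 0 := by
    rw [smul_smul, mul_neg, mul_div_cancel₀ _ hw₁, neg_smul, neg_add_cancel]
  refine ⟨w₁, w₂, -(w₂ / w₁) • u, u, hw, hc, h0, ?_, hu, (splitting_value_eq hw h0 hw₁).symm⟩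
  have hratio : (w₂ / w₁) ^ 2 ≤ 1 := by
    rw [div_pow, div_le_one (by positivity)]
    exact sq_le_sq.2 hw₂
  simp only [smul_dotProduct, dotProduct_smul, smul_eq_mul]
  nlinarith [dotProduct_self_nonneg_real u]

theorem min_le_dotProduct_mulVec {lo : ℝ} (hlo : ∀ v, lo * (v ⬝ᵥ v) ≤ v ⬝ᵥ S *ᵥ v)
    {v : n → ℝ} (hv : v ⬝ᵥ v ≤ 1) : min lo 0 ≤ v ⬝ᵥ S *ᵥ v := by
  refine le_trans ?_ (hlo v)
  have hv₀ := dotProduct_self_nonneg_real v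
  rcases le_total lo 0 with h | h
  · exact (min_le_left _ _).trans (by nlinarith)
  · exact (min_le_right _ _).trans (by positivity)

theorem min_le_of_nonneg_weights {lo : ℝ} (hlo : ∀ v, lo * (v ⬝ᵥ v) ≤ v ⬝ᵥ S *ᵥ v)
    (hw : w₁ + w₂ = 1) (hw₁ : 0 ≤ w₁) (hw₂ : 0 ≤ w₂) (hδ₁ : δ₁ ⬝ᵥ δ₁ ≤ 1)
    (hδ₂ : δ₂ ⬝ᵥ δ₂ ≤ 1) :
    min lo 0 ≤ w₁ * (δ₁ ⬝ᵥ S *ᵥ δ₁) + w₂ * (δ₂ ⬝ᵥ S *ᵥ δ₂) :=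
  calc min lo 0 = w₁ * min lo 0 + w₂ * min lo 0 := by rw [← add_mul, hw, one_mul]
    _ ≤ _ := by gcongr <;> exact min_le_dotProduct_mulVec hlo ‹_›

theorem neg_div_le_div_of_neg (hw : w₁ + w₂ = 1) (hw₂ : w₂ < 0) (hc : |w₁| + |w₂| ≤ c) :
    -((c - 1) / (c + 1)) ≤ w₂ / w₁ := by
  have hw₁ : 0 < w₁ := by linarith
  rw [abs_of_pos hw₁, abs_of_neg hw₂] at hc
  rw [← neg_div, div_le_div_iff₀ (by linarith) hw₁]
  nlinarith

theorem min_le_of_neg_weight {hi : ℝ} (hhi : ∀ v, v ⬝ᵥ S *ᵥ v ≤ hi * (v ⬝ᵥ v))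
    (hw : w₁ + w₂ = 1) (hw₂ : w₂ < 0) (hc : |w₁| + |w₂| ≤ c) (h0 : w₁ • δ₁ + w₂ • δ₂ = 0)
    (hδ₂ : δ₂ ⬝ᵥ δ₂ ≤ 1) :
    min (-((c - 1) / (c + 1)) * hi) 0 ≤ w₁ * (δ₁ ⬝ᵥ S *ᵥ δ₁) + w₂ * (δ₂ ⬝ᵥ S *ᵥ δ₂) := by
  have hw₁ : 0 < w₁ := by linarith
  rw [splitting_value_eq hw h0 hw₁.ne']
  have hr := neg_div_le_div_of_neg hw hw₂ hc
  have hr₀ : w₂ / w₁ < 0 := div_neg_of_neg_of_pos hw₂ hw₁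
  have hq := hhi δ₂
  have ha := dotProduct_self_nonneg_real δ₂
  rcases le_total 0 hi with h | h
  · refine (min_le_left _ _).trans ?_
    calc -((c - 1) / (c + 1)) * hi
        ≤ -((c - 1) / (c + 1)) * (hi * (δ₂ ⬝ᵥ δ₂)) := by nlinarith [mul_le_of_le_one_right h hδ₂]
      _ ≤ w₂ / w₁ * (hi * (δ₂ ⬝ᵥ δ₂)) := by gcongr
      _ ≤ w₂ / w₁ * (δ₂ ⬝ᵥ S *ᵥ δ₂) := mul_le_mul_of_nonpos_left hq hr₀.le
  · exact (min_le_right _ _).trans (by nlinarith [mul_nonpos_of_nonpos_of_nonneg h ha])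

theorem min_le_of_mem_signedSplittingValues {lo hi t : ℝ}
    (hlo : ∀ v, lo * (v ⬝ᵥ v) ≤ v ⬝ᵥ S *ᵥ v) (hhi : ∀ v, v ⬝ᵥ S *ᵥ v ≤ hi * (v ⬝ᵥ v))
    (ht : t ∈ signedSplittingValues c S) :
    min (min lo (-((c - 1) / (c + 1)) * hi)) 0 ≤ t := by
  obtain ⟨w₁, w₂, δ₁, δ₂, hw, hc, h0, hδ₁, hδ₂, rfl⟩ := ht
  rcases lt_or_ge w₂ 0 with hw₂ | hw₂
  · exact (min_le_min_right 0 (min_le_right _ _)).trans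
      (min_le_of_neg_weight hhi hw hw₂ hc h0 hδ₂)
  rcases lt_or_ge w₁ 0 with hw₁ | hw₁
  · rw [add_comm (w₁ * _)]
    exact (min_le_min_right 0 (min_le_right _ _)).trans
      (min_le_of_neg_weight hhi (by linarith) hw₁ (by linarith) (by rwa [add_comm]) hδ₁)
  · exact (min_le_min_right 0 (min_le_left _ _)).trans
      (min_le_of_nonneg_weights hlo hw hw₁ hw₂ hδ₁ hδ₂)

end SignedSplitting

theorem stmt_3 (d : ℕ) (c : ℝ) (hc : 1 ≤ c)
    (S : Matrix (Fin d) (Fin d) ℝ) (hS : S.IsSymm) (lmin lmax : ℝ)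
    (hmin : IsLeast {μ : ℝ | ∃ v : Fin d → ℝ, v ≠ 0 ∧ S.mulVec v = μ • v} lmin)
    (hmax : IsGreatest {μ : ℝ | ∃ v : Fin d → ℝ, v ≠ 0 ∧ S.mulVec v = μ • v} lmax) :
    IsLeast {t : ℝ | ∃ (w₁ w₂ : ℝ) (δ₁ δ₂ : Fin d → ℝ),
      w₁ + w₂ = 1 ∧ |w₁| + |w₂| ≤ c ∧ w₁ • δ₁ + w₂ • δ₂ = 0 ∧
      δ₁ ⬝ᵥ δ₁ ≤ 1 ∧ δ₂ ⬝ᵥ δ₂ ≤ 1 ∧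
      t = w₁ * (δ₁ ⬝ᵥ S.mulVec δ₁) + w₂ * (δ₂ ⬝ᵥ S.mulVec δ₂)}
      (min (min lmin (-((c - 1) / (c + 1)) * lmax)) 0) := by
  change IsLeast (signedSplittingValues c S) _
  have hS' : S.IsHermitian := isHermitian_iff_isSymm.2 hS
  refine ⟨min_rec' _ (min_rec' _ ?_ ?_) ?_, fun t ht => min_le_of_mem_signedSplittingValues
    (hS'.mul_dotProduct_self_le_dotProduct_mulVec fun μ hμ =>
      hmin.2 (exists_mulVec_eq_smul_of_mem_spectrum hμ))
    (hS'.dotProduct_mulVec_le_mul_dotProduct_self fun μ hμ =>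
      hmax.2 (exists_mulVec_eq_smul_of_mem_spectrum hμ)) ht⟩
  · obtain ⟨v, hv, hSv⟩ := hmin.1
    obtain ⟨u, hu, hSu⟩ := exists_dotProduct_self_eq_one_of_mulVec_eq_smul hv hSv
    simpa [hSu] using div_mul_mem_signedSplittingValues (S := S) (c := c) (w₁ := 1 / 2)
      (w₂ := 1 / 2) (by norm_num) (by norm_num [abs_of_pos]; linarith) (by norm_num) le_rfl hu.le
  · obtain ⟨v, hv, hSv⟩ := hmax.1
    obtain ⟨u, hu, hSu⟩ := exists_dotProduct_self_eq_one_of_mulVec_eq_smul hv hSv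
    have habs₁ : |(c + 1) / 2| = (c + 1) / 2 := abs_of_pos (by linarith)
    have habs₂ : |(1 - c) / 2| = (c - 1) / 2 := by rw [abs_of_nonpos (by linarith)]; ring
    convert div_mul_mem_signedSplittingValues (S := S) (c := c) (w₁ := (c + 1) / 2) (w₂ := (1 - c) / 2)
      (by ring) (by rw [habs₁, habs₂]; linarith) (by linarith) (by rw [habs₁, habs₂]; linarith)
      hu.le using 1
    rw [hSu]; field_simp; ring
  · simpa using div_mul_mem_signedSplittingValues (S := S) (c := c) (w₁ := 1) (w₂ := 0)
      (u := 0) (by norm_num) (by simpa using hc) one_ne_zero (by simp) (by simp)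
end

section
/- For c ≥ 1 and any positive integer d, the maximum of w₁‖r₁‖² + w₂‖r₂‖² + w₃‖r₃‖² over w ∈ ℝ³, r₁,r₂,r₃ ∈ ℝᵈ subject to w₁+w₂+w₃ = 1, |w₁|+|w₂|+|w₃| ≤ c, w₁r₁+w₂r₂+w₃r₃ = 0, ‖rᵢ‖ ≤ 1 for all i, equals (c+1)/2. -/
open Matrix BigOperators

theorem stmt_5 (d : ℕ) (hd : 0 < d) (c : ℝ) (hc : 1 ≤ c) :
    IsGreatest {t : ℝ | ∃ (w : Fin 3 → ℝ) (r : Fin 3 → Fin d → ℝ),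
      ∑ i, w i = 1 ∧ ∑ i, |w i| ≤ c ∧ ∑ i, w i • r i = 0 ∧
      (∀ i, r i ⬝ᵥ r i ≤ 1) ∧ t = ∑ i, w i * (r i ⬝ᵥ r i)}
      ((c + 1) / 2) := by
  have key : ∀ w x : ℝ, 0 ≤ x → x ≤ 1 → w * x ≤ (w + |w|) / 2 := by
    intro w x hx hx1
    rcases abs_cases w with ⟨h1, h2⟩ | ⟨h1, h2⟩ <;> nlinarith
  constructor
  · refine ⟨![(c+1)/4, (c+1)/4, -(c-1)/2],
      ![fun j => if j = ⟨0, hd⟩ then 1 else 0,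
        fun j => if j = ⟨0, hd⟩ then -1 else 0, 0], ?_, ?_, ?_, ?_, ?_⟩
    · simp [Fin.sum_univ_three]; ring
    · simp only [Fin.sum_univ_three, Matrix.cons_val_zero, Matrix.cons_val_one,
        Matrix.head_cons, Matrix.cons_val_two, Matrix.tail_cons]
      rw [abs_of_nonneg (by linarith : (0:ℝ) ≤ (c+1)/4),
        abs_of_nonpos (by linarith : -(c-1)/2 ≤ 0)]
      linarith
    · funext j
      simp only [Fin.sum_univ_three, Matrix.cons_val_zero, Matrix.cons_val_one,
        Matrix.head_cons, Matrix.cons_val_two, Matrix.tail_cons, Pi.add_apply,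
        Pi.smul_apply, smul_eq_mul, Pi.zero_apply]
      split_ifs <;> ring
    · intro i
      fin_cases i <;>
        simp [dotProduct, ite_mul, mul_ite, Finset.sum_ite_eq']
    · simp only [Fin.sum_univ_three, Matrix.cons_val_zero, Matrix.cons_val_one,
        Matrix.head_cons, Matrix.cons_val_two, Matrix.tail_cons]
      simp [dotProduct, ite_mul, mul_ite, Finset.sum_ite_eq']
      ring
  · rintro t ⟨w, r, h1, h2, _h3, h4, h5⟩
    have hnn : ∀ i, (0:ℝ) ≤ r i ⬝ᵥ r i := fun i =>
      Finset.sum_nonneg fun j _ => mul_self_nonneg _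
    have b0 := key (w 0) _ (hnn 0) (h4 0)
    have b1 := key (w 1) _ (hnn 1) (h4 1)
    have b2 := key (w 2) _ (hnn 2) (h4 2)
    rw [Fin.sum_univ_three] at h1 h2
    rw [h5, Fin.sum_univ_three]
    linarith
end

section
/- For c ≥ 1 and any positive integer d, the minimum of w₁‖r₁‖² + w₂‖r₂‖² + w₃‖r₃‖² over w ∈ ℝ³, r₁,r₂,r₃ ∈ ℝᵈ subject to w₁+w₂+w₃ = 1, |w₁|+|w₂|+|w₃| ≤ c, w₁r₁+w₂r₂+w₃r₃ = 0, ‖rᵢ‖ ≤ 1 for all i, equals −(c−1)/2. -/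
open Matrix BigOperators

theorem stmt_6 (d : ℕ) (hd : 0 < d) (c : ℝ) (hc : 1 ≤ c) :
    IsLeast {t : ℝ | ∃ (w : Fin 3 → ℝ) (r : Fin 3 → Fin d → ℝ),
      ∑ i, w i = 1 ∧ ∑ i, |w i| ≤ c ∧ ∑ i, w i • r i = 0 ∧
      (∀ i, r i ⬝ᵥ r i ≤ 1) ∧ t = ∑ i, w i * (r i ⬝ᵥ r i)}
      (-(c - 1) / 2) := by
  constructor
  · -- membership
    set e : Fin d → ℝ := Pi.single ⟨0, hd⟩ 1 with he
    have hdot : e ⬝ᵥ e = 1 := by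
      simp [he, dotProduct, Pi.single_apply, Finset.sum_ite_eq']
    have hdotn : (-e) ⬝ᵥ (-e) = 1 := by
      rw [neg_dotProduct, dotProduct_neg, neg_neg, hdot]
    have hdot0 : (0 : Fin d → ℝ) ⬝ᵥ 0 = 0 := zero_dotProduct 0
    refine ⟨![-(c-1)/4, -(c-1)/4, (c+1)/2], ![e, -e, 0], ?_, ?_, ?_, ?_, ?_⟩
    · rw [Fin.sum_univ_three]
      simp only [Matrix.cons_val_zero, Matrix.cons_val_one, Matrix.head_cons,
        Matrix.cons_val_two, Matrix.tail_cons]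
      ring
    · rw [Fin.sum_univ_three]
      simp only [Matrix.cons_val_zero, Matrix.cons_val_one, Matrix.head_cons,
        Matrix.cons_val_two, Matrix.tail_cons]
      rw [abs_of_nonpos (by linarith), abs_of_nonneg (by linarith)]
      linarith
    · rw [Fin.sum_univ_three]
      simp only [Matrix.cons_val_zero, Matrix.cons_val_one, Matrix.head_cons,
        Matrix.cons_val_two, Matrix.tail_cons]
      module
    · intro i
      have h0 : (![e, -e, 0] : Fin 3 → Fin d → ℝ) 0 ⬝ᵥ ![e, -e, 0] 0 ≤ 1 := by
        show e ⬝ᵥ e ≤ 1; rw [hdot]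
      have h1 : (![e, -e, 0] : Fin 3 → Fin d → ℝ) 1 ⬝ᵥ ![e, -e, 0] 1 ≤ 1 := by
        show (-e) ⬝ᵥ (-e) ≤ 1; rw [hdotn]
      have h2 : (![e, -e, 0] : Fin 3 → Fin d → ℝ) 2 ⬝ᵥ ![e, -e, 0] 2 ≤ 1 := by
        show (0 : Fin d → ℝ) ⬝ᵥ 0 ≤ 1; rw [hdot0]; linarith
      fin_cases i <;> assumption
    · rw [Fin.sum_univ_three]
      simp only [Matrix.cons_val_zero, Matrix.cons_val_one, Matrix.head_cons,
        Matrix.cons_val_two, Matrix.tail_cons]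
      rw [hdot, hdotn, hdot0]
      ring
  · -- lower bound
    rintro t ⟨w, r, hsum, habs, -, hnorm, rfl⟩
    have hq0 : ∀ i, 0 ≤ r i ⬝ᵥ r i := fun i =>
      Finset.sum_nonneg fun j _ => mul_self_nonneg _
    have key : ∀ i, (w i - |w i|) / 2 ≤ w i * (r i ⬝ᵥ r i) := by
      intro i
      rcases le_or_gt 0 (w i) with h | h
      · rw [abs_of_nonneg h]
        simpa using mul_nonneg h (hq0 i)
      · rw [abs_of_neg h]
        have := mul_le_mul_of_nonpos_left (hnorm i) h.le
        linarith
    calc -(c-1)/2 ≤ (∑ i, w i - ∑ i, |w i|) / 2 := by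
          rw [hsum]; linarith
      _ = ∑ i, (w i - |w i|) / 2 := by
          rw [← Finset.sum_sub_distrib, Finset.sum_div]
      _ ≤ ∑ i, w i * (r i ⬝ᵥ r i) := Finset.sum_le_sum fun i _ => key i
end

section
/- Let S be a symmetric d×d real matrix, c ≥ 1, and m ≥ 4 a positive integer. Then the minimum of ∑_{i=1}^m wᵢ δᵢᵀ S δᵢ over w ∈ ℝᵐ with ∑wᵢ = 1, ∑|wᵢ| ≤ c, and δᵢ ∈ ℝᵈ with ∑wᵢδᵢ = 0 and ‖δᵢ‖ ≤ 1 equals ((c+1)/2)·min(λ_min(S), 0) − ((c−1)/2)·max(λ_max(S), 0), independently of m. -/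
/-!
For a symmetric `S`, the Rayleigh bounds `λ_min ‖δ‖² ≤ δᵀ S δ ≤ λ_max ‖δ‖²` confine each
`qᵢ = δᵢᵀ S δᵢ` with `‖δᵢ‖ ≤ 1` to `[a, b] = [min λ_min 0, max λ_max 0]`. Splitting
`wᵢ = wᵢ⁺ - wᵢ⁻` gives `∑ wᵢ qᵢ ≥ (∑ wᵢ⁺) a - (∑ wᵢ⁻) b`, and `∑ wᵢ = 1`, `∑ |wᵢ| ≤ c` force
`∑ wᵢ⁺ ≤ (c + 1) / 2` and `∑ wᵢ⁻ ≤ (c - 1) / 2`. The bound is attained by a quartet: weights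
`(c + 1) / 4` on `±u` and `-(c - 1) / 4` on `±v`, where `u`, `v` are unit eigenvectors for
`λ_min`, `λ_max` (or `0` when the clipped value is `0`); the signs make `∑ wᵢ δᵢ = 0`, and
any further indices get weight `0`.
-/

open Matrix BigOperators Function

theorem Matrix.IsSymm.isHermitian_of_trivialStar {n α : Type*} [Star α] [TrivialStar α]
    {A : Matrix n n α} (hA : A.IsSymm) : A.IsHermitian := by
  rw [IsHermitian, conjTranspose_eq_transpose_of_trivial]
  exact hA

variable {n : Type*} [Fintype n]

def Matrix.realEigenvalues (S : Matrix n n ℝ) : Set ℝ :=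
  {μ | ∃ v : n → ℝ, v ≠ 0 ∧ S *ᵥ v = μ • v}

theorem Matrix.neg_mem_realEigenvalues_neg {S : Matrix n n ℝ} {μ : ℝ}
    (hμ : μ ∈ S.realEigenvalues) : -μ ∈ (-S).realEigenvalues := by
  obtain ⟨v, hv, hSv⟩ := hμ
  exact ⟨v, hv, by rw [neg_mulVec, hSv, neg_smul]⟩

theorem Matrix.IsHermitian.mul_dotProduct_self_le_dotProduct_mulVec_s8 [DecidableEq n]
    {S : Matrix n n ℝ} (hS : S.IsHermitian) {l : ℝ} (hl : l ∈ lowerBounds S.realEigenvalues)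
    (x : n → ℝ) : l * (x ⬝ᵥ x) ≤ x ⬝ᵥ S *ᵥ x := by
  have hH : (S - l • 1).IsHermitian := hS.sub (isHermitian_one.smul (IsSelfAdjoint.all l))
  have hpsd : (S - l • 1).PosSemidef := by
    refine hH.posSemidef_iff_eigenvalues_nonneg.mpr fun i => ?_
    have hSv := hH.mulVec_eigenvectorBasis i
    rw [sub_mulVec, smul_mulVec, one_mulVec, sub_eq_iff_eq_add, ← add_smul] at hSv
    have hshift : hH.eigenvalues i + l ∈ S.realEigenvalues :=
      ⟨_, by simpa using hH.eigenvectorBasis.orthonormal.ne_zero i, hSv⟩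
    simpa using hl hshift
  have hx := hpsd.dotProduct_mulVec_nonneg x
  simp only [star_trivial, sub_mulVec, smul_mulVec, one_mulVec, dotProduct_sub,
    dotProduct_smul, smul_eq_mul] at hx
  linarith

theorem Matrix.IsHermitian.dotProduct_mulVec_le_mul_dotProduct_self_s8 [DecidableEq n]
    {S : Matrix n n ℝ} (hS : S.IsHermitian) {l : ℝ} (hl : l ∈ upperBounds S.realEigenvalues)
    (x : n → ℝ) : x ⬝ᵥ S *ᵥ x ≤ l * (x ⬝ᵥ x) := by
  have hneg := hS.neg.mul_dotProduct_self_le_dotProduct_mulVec_s8 (l := -l) (fun μ hμ => by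
    linarith [hl (by simpa using neg_mem_realEigenvalues_neg hμ)]) x
  rw [neg_mulVec, dotProduct_neg] at hneg
  linarith

theorem Matrix.exists_dotProduct_self_eq_one_of_mem_realEigenvalues {S : Matrix n n ℝ} {μ : ℝ}
    (hμ : μ ∈ S.realEigenvalues) : ∃ u : n → ℝ, u ⬝ᵥ u = 1 ∧ u ⬝ᵥ S *ᵥ u = μ := by
  obtain ⟨v, hv, hSv⟩ := hμ
  have hv₀ : 0 ≤ v ⬝ᵥ v := by simpa using dotProduct_star_self_nonneg v
  have hpos : 0 < v ⬝ᵥ v := hv₀.lt_of_ne' (mt dotProduct_self_eq_zero.mp hv)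
  set r := √(v ⬝ᵥ v)
  have hr : r * r = v ⬝ᵥ v := Real.mul_self_sqrt hpos.le
  have hr0 : r ≠ 0 := by positivity
  refine ⟨r⁻¹ • v, ?_, ?_⟩
  · simp only [smul_dotProduct, dotProduct_smul, smul_eq_mul, ← hr]
    field_simp
  · simp only [mulVec_smul, hSv, smul_dotProduct, dotProduct_smul, smul_eq_mul, ← hr]
    field_simp

theorem Matrix.exists_dotProduct_self_le_one_of_eq_or_eq_zero {S : Matrix n n ℝ} {μ t : ℝ}
    (hμ : μ ∈ S.realEigenvalues) (ht : t = μ ∨ t = 0) :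
    ∃ u : n → ℝ, u ⬝ᵥ u ≤ 1 ∧ u ⬝ᵥ S *ᵥ u = t := by
  rcases ht with rfl | rfl
  · obtain ⟨u, hu, huS⟩ := exists_dotProduct_self_eq_one_of_mem_realEigenvalues hμ
    exact ⟨u, hu.le, huS⟩
  · exact ⟨0, by simp, by simp⟩

theorem Matrix.IsHermitian.dotProduct_mulVec_mem_Icc [DecidableEq n] {S : Matrix n n ℝ}
    (hS : S.IsHermitian) {l L : ℝ} (hl : l ∈ lowerBounds S.realEigenvalues)
    (hL : L ∈ upperBounds S.realEigenvalues) {x : n → ℝ} (hx : x ⬝ᵥ x ≤ 1) :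
    x ⬝ᵥ S *ᵥ x ∈ Set.Icc (min l 0) (max L 0) := by
  have hx₀ : 0 ≤ x ⬝ᵥ x := by simpa using dotProduct_star_self_nonneg x
  have hlow := hS.mul_dotProduct_self_le_dotProduct_mulVec_s8 hl x
  have hup := hS.dotProduct_mulVec_le_mul_dotProduct_self_s8 hL x
  constructor
  · rcases le_total 0 l with h | h
    · nlinarith [min_le_right l 0]
    · nlinarith [min_le_left l 0]
  · rcases le_total 0 L with h | h
    · nlinarith [le_max_left L 0]
    · nlinarith [le_max_right L 0]

theorem le_sum_mul_of_sum_abs_le {ι : Type*} [Fintype ι] {w q : ι → ℝ} {a b c : ℝ}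
    (hw : ∑ i, w i = 1) (hwc : ∑ i, |w i| ≤ c) (hab : a ≤ b) (hq : ∀ i, q i ∈ Set.Icc a b) :
    (c + 1) / 2 * a - (c - 1) / 2 * b ≤ ∑ i, w i * q i := by
  -- Termwise `w q ≥ w⁺ a - w⁻ b`, with `w± = (|w| ± w) / 2`.
  have hterm : ∀ i, |w i| * ((a - b) / 2) + w i * ((a + b) / 2) ≤ w i * q i := by
    intro i
    obtain ⟨hqa, hqb⟩ := hq i
    rcases le_total 0 (w i) with h | h
    · rw [abs_of_nonneg h]; nlinarith
    · rw [abs_of_nonpos h]; nlinarith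
  calc (c + 1) / 2 * a - (c - 1) / 2 * b
      ≤ (∑ i, |w i|) * ((a - b) / 2) + (∑ i, w i) * ((a + b) / 2) := by
        rw [hw]; nlinarith
    _ ≤ ∑ i, w i * q i := by
        rw [Finset.sum_mul, Finset.sum_mul, ← Finset.sum_add_distrib]
        exact Finset.sum_le_sum fun i _ => hterm i

/-- `G_m^{-c}` of the paper is the infimum of `S.splittingValues c (Fin m)`. -/
def Matrix.splittingValues (S : Matrix n n ℝ) (c : ℝ) (ι : Type*) [Fintype ι] : Set ℝ :=
  {t | ∃ (w : ι → ℝ) (δ : ι → n → ℝ), ∑ i, w i = 1 ∧ ∑ i, |w i| ≤ c ∧ ∑ i, w i • δ i = 0 ∧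
    (∀ i, δ i ⬝ᵥ δ i ≤ 1) ∧ t = ∑ i, w i * (δ i ⬝ᵥ S *ᵥ δ i)}

theorem Function.Injective.sum_extend_zero {ι κ α β M : Type*} [Fintype ι] [Fintype κ]
    [Zero α] [Zero β] [AddCommMonoid M] {e : ι → κ} (he : Injective e) (w : ι → α) (δ : ι → β)
    (g : α → β → M) (hg : g 0 0 = 0) :
    ∑ j, g (extend e w 0 j) (extend e δ 0 j) = ∑ i, g (w i) (δ i) :=
  (Fintype.sum_of_injective e he _ _
    (fun j hj => by rw [extend_apply' _ _ _ hj, extend_apply' _ _ _ hj, Pi.zero_apply,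
      Pi.zero_apply, hg])
    (fun i => by rw [he.extend_apply, he.extend_apply])).symm

theorem Matrix.splittingValues_mono {S : Matrix n n ℝ} {c : ℝ} {ι κ : Type*} [Fintype ι]
    [Fintype κ] {e : ι → κ} (he : Injective e) :
    S.splittingValues c ι ⊆ S.splittingValues c κ := by
  rintro t ⟨w, δ, hw, hwc, hbal, hδ, rfl⟩
  refine ⟨extend e w 0, extend e δ 0, ?_, ?_, ?_, fun j => ?_, ?_⟩
  · rwa [he.sum_extend_zero w δ (fun a _ => a) rfl]
  · rwa [he.sum_extend_zero w δ (fun a _ => |a|) abs_zero]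
  · rwa [he.sum_extend_zero w δ (fun a v => a • v) (zero_smul ℝ 0)]
  · by_cases hj : ∃ i, e i = j
    · obtain ⟨i, rfl⟩ := hj
      rw [he.extend_apply]
      exact hδ i
    · simp [extend_apply' _ _ _ hj]
  · exact (he.sum_extend_zero w δ (fun a v => a * (v ⬝ᵥ S *ᵥ v)) (zero_mul _)).symm

theorem Matrix.quartet_mem_splittingValues (S : Matrix n n ℝ) {c : ℝ} (hc : 1 ≤ c)
    {u v : n → ℝ} (hu : u ⬝ᵥ u ≤ 1) (hv : v ⬝ᵥ v ≤ 1) :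
    (c + 1) / 2 * (u ⬝ᵥ S *ᵥ u) - (c - 1) / 2 * (v ⬝ᵥ S *ᵥ v) ∈ S.splittingValues c (Fin 4) := by
  refine ⟨![(c + 1) / 4, (c + 1) / 4, -((c - 1) / 4), -((c - 1) / 4)], ![u, -u, v, -v],
    ?_, ?_, ?_, ?_, ?_⟩
  · simp [Fin.sum_univ_four]; ring
  · have hc₁ : 0 ≤ (c + 1) / 4 := by linarith
    have hc₂ : 0 ≤ (c - 1) / 4 := by linarith
    simp [Fin.sum_univ_four, abs_of_nonneg hc₁, abs_of_nonneg hc₂]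
    linarith
  · simp [Fin.sum_univ_four]
  · intro i; fin_cases i <;> simpa
  · simp [Fin.sum_univ_four, mulVec_neg]; ring

theorem stmt_8 (d m : ℕ) (hm : 4 ≤ m) (c : ℝ) (hc : 1 ≤ c)
    (S : Matrix (Fin d) (Fin d) ℝ) (hS : S.IsSymm) (lmin lmax : ℝ)
    (hmin : IsLeast {μ : ℝ | ∃ v : Fin d → ℝ, v ≠ 0 ∧ S.mulVec v = μ • v} lmin)
    (hmax : IsGreatest {μ : ℝ | ∃ v : Fin d → ℝ, v ≠ 0 ∧ S.mulVec v = μ • v} lmax) :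
    IsLeast {t : ℝ | ∃ (w : Fin m → ℝ) (δ : Fin m → Fin d → ℝ),
      ∑ i, w i = 1 ∧ ∑ i, |w i| ≤ c ∧ ∑ i, w i • δ i = 0 ∧
      (∀ i, δ i ⬝ᵥ δ i ≤ 1) ∧
      t = ∑ i, w i * (δ i ⬝ᵥ S.mulVec (δ i))}
      ((c + 1) / 2 * min lmin 0 - (c - 1) / 2 * max lmax 0) := by
  change IsLeast (S.splittingValues c (Fin m)) _
  have hH := hS.isHermitian_of_trivialStar
  have hab : min lmin 0 ≤ max lmax 0 := (min_le_right _ _).trans (le_max_right _ _)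
  refine ⟨splittingValues_mono (Fin.castLE_injective hm) ?_, ?_⟩
  · obtain ⟨u, hu, huS⟩ :=
      exists_dotProduct_self_le_one_of_eq_or_eq_zero hmin.1 (min_choice lmin 0)
    obtain ⟨v, hv, hvS⟩ :=
      exists_dotProduct_self_le_one_of_eq_or_eq_zero hmax.1 (max_choice lmax 0)
    simpa only [huS, hvS] using S.quartet_mem_splittingValues hc hu hv
  · rintro t ⟨w, δ, hw, hwc, -, hδ, rfl⟩
    exact le_sum_mul_of_sum_abs_le hw hwc hab fun i =>
      hH.dotProduct_mulVec_mem_Icc hmin.2 hmax.2 (hδ i)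
end

section
/- Consider the one-hidden-layer network f(x; θ, w) = ∑_{i=1}^m wᵢ σ(θᵢᵀx) with mean-square loss over a dataset {x^(ℓ)}_{ℓ=1}^n, with splitting matrix Sᵢ = (1/n)∑_ℓ wᵢ e_ℓ h_{i,ℓ} x^(ℓ)(x^(ℓ))ᵀ where e_ℓ = f(x^(ℓ)) − y(x^(ℓ)) and h_{i,ℓ} = σ''(θᵢᵀx^(ℓ)). Assume |h_{i,ℓ}| ≥ h > 0 for all i, ℓ, and that λ_X := λ_min(XᵀX/d²) > 0 where X = [vec(x^(1)x^(1)ᵀ), …, vec(x^(n)x^(n)ᵀ)] ∈ ℝ^{d²×n}. Then for every i, (1/n)∑_ℓ e_ℓ² ≤ (n/(d h² λ_X)) · (ρ(Sᵢ)/wᵢ)², where ρ(Sᵢ) is the spectral radius of Sᵢ. -/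
open Matrix

lemma aux_dot {k j : Type*} [Fintype k] [Fintype j] (A : Matrix k j ℝ) (v : j → ℝ) :
    (A *ᵥ v) ⬝ᵥ (A *ᵥ v) = v ⬝ᵥ (Aᵀ * A) *ᵥ v := by
  symm; rw [← mulVec_mulVec, dotProduct_mulVec, vecMul_transpose]

lemma aux_quad {k : ℕ} (M : Matrix (Fin k) (Fin k) ℝ) (hM : M.IsHermitian) (l : ℝ)
    (hl : ∀ μ : ℝ, (∃ v : Fin k → ℝ, v ≠ 0 ∧ M.mulVec v = μ • v) → l ≤ μ)
    (v : Fin k → ℝ) : l * (v ⬝ᵥ v) ≤ v ⬝ᵥ M *ᵥ v := by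
  classical
  set U : Matrix (Fin k) (Fin k) ℝ := (hM.eigenvectorUnitary : Matrix (Fin k) (Fin k) ℝ) with hUdef
  have hUs : U * star U = 1 := Unitary.mul_star_self_of_mem (hM.eigenvectorUnitary).2
  have hsU : star U * U = 1 := Unitary.star_mul_self_of_mem (hM.eigenvectorUnitary).2
  have hspec : M = U * diagonal hM.eigenvalues * star U := by
    have := hM.spectral_theorem; simpa using this
  have hstar : star U = Uᵀ := rfl
  set u : Fin k → ℝ := star U *ᵥ v with hu
  have hv : U *ᵥ u = v := by rw [hu, mulVec_mulVec, hUs, one_mulVec]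
  have h1 : v ⬝ᵥ v = u ⬝ᵥ u := by
    conv_lhs => rw [← hv]
    rw [aux_dot, ← hstar, hsU, one_mulVec]
  have h2 : v ⬝ᵥ M *ᵥ v = ∑ i, hM.eigenvalues i * (u i)^2 := by
    have e1 : v ⬝ᵥ M *ᵥ v = v ⬝ᵥ (U * diagonal hM.eigenvalues * star U) *ᵥ v := by
      rw [← hspec]
    rw [e1, ← mulVec_mulVec, ← mulVec_mulVec, dotProduct_mulVec, ← mulVec_transpose, ← hstar,
      ← hu]
    simp only [dotProduct, mulVec_diagonal]
    exact Finset.sum_congr rfl fun i _ => by ring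
  have h3 : ∀ i, l ≤ hM.eigenvalues i := fun i =>
    hl _ ⟨⇑(hM.eigenvectorBasis i), fun hcon =>
      hM.eigenvectorBasis.toBasis.ne_zero i (by ext j; exact congrFun hcon j),
      by simpa using hM.mulVec_eigenvectorBasis i⟩
  rw [h1, h2, dotProduct, Finset.mul_sum]
  apply Finset.sum_le_sum
  intro i _
  have : u i * u i = (u i)^2 := (pow_two _).symm
  nlinarith [sq_nonneg (u i), h3 i]

lemma aux_trace {k : ℕ} (S : Matrix (Fin k) (Fin k) ℝ) (hS : S.IsHermitian) :
    trace (S * S) = ∑ i, (hS.eigenvalues i)^2 := by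
  classical
  set U : Matrix (Fin k) (Fin k) ℝ := (hS.eigenvectorUnitary : Matrix (Fin k) (Fin k) ℝ) with hUdef
  have hsU : star U * U = 1 := Unitary.star_mul_self_of_mem (hS.eigenvectorUnitary).2
  have hspec : S = U * diagonal hS.eigenvalues * star U := by
    have := hS.spectral_theorem; simpa using this
  have e1 : trace (S * S) = trace ((U * diagonal hS.eigenvalues * star U) * (U * diagonal hS.eigenvalues * star U)) := by
    rw [← hspec]
  have e2 : (U * diagonal hS.eigenvalues * star U) * (U * diagonal hS.eigenvalues * star U)
      = U * (diagonal hS.eigenvalues * diagonal hS.eigenvalues) * star U := by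
    have h : (U * diagonal hS.eigenvalues * star U) * (U * diagonal hS.eigenvalues * star U)
        = U * diagonal hS.eigenvalues * (star U * U) * diagonal hS.eigenvalues * star U := by
      noncomm_ring
    rw [h, hsU, Matrix.mul_one, Matrix.mul_assoc U]
  rw [e1, e2, trace_mul_cycle, hsU, Matrix.one_mul, diagonal_mul_diagonal, trace_diagonal]
  simp [pow_two]

theorem stmt_14 (d n m : ℕ) (hd : 0 < d) (hn : 0 < n)
    (x : Fin n → Fin d → ℝ) (y : Fin n → ℝ)
    (σ σ'' : ℝ → ℝ) (θ : Fin m → Fin d → ℝ) (w : Fin m → ℝ)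
    (h lX : ℝ) (hh : 0 < h)
    (hcurv : ∀ i ℓ, h ≤ |σ'' (θ i ⬝ᵥ x ℓ)|)
    (e : Fin n → ℝ)
    (he : ∀ ℓ, e ℓ = (∑ i, w i * σ (θ i ⬝ᵥ x ℓ)) - y ℓ)
    (Si : Fin m → Matrix (Fin d) (Fin d) ℝ)
    (hSi : ∀ i, Si i = Matrix.of fun a b =>
      (1 / (n : ℝ)) * ∑ ℓ, w i * e ℓ * σ'' (θ i ⬝ᵥ x ℓ) * (x ℓ a * x ℓ b))
    (X : Matrix (Fin d × Fin d) (Fin n) ℝ)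
    (hX : X = Matrix.of fun p ℓ => x ℓ p.1 * x ℓ p.2)
    (hlX : IsLeast {μ : ℝ | ∃ v : Fin n → ℝ, v ≠ 0 ∧
      ((1 / (d ^ 2 : ℝ)) • (Xᵀ * X)).mulVec v = μ • v} lX)
    (hlXpos : 0 < lX)
    (ρ : Fin m → ℝ)
    (hρ : ∀ i, IsGreatest {t : ℝ | ∃ (μ : ℝ) (v : Fin d → ℝ), v ≠ 0 ∧
      (Si i).mulVec v = μ • v ∧ t = |μ|} (ρ i)) :
    ∀ i, w i ≠ 0 →
      (1 / (n : ℝ)) * ∑ ℓ, (e ℓ) ^ 2 ≤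
        ((n : ℝ) / (d * h ^ 2 * lX)) * (ρ i / w i) ^ 2 := by
  intro i hwi
  classical
  have hd' : (0:ℝ) < (d:ℝ) := by exact_mod_cast hd
  have hn' : (0:ℝ) < (n:ℝ) := by exact_mod_cast hn
  set E : ℝ := ∑ ℓ, (e ℓ)^2 with hE
  set c : Fin n → ℝ := fun ℓ => w i * e ℓ * σ'' (θ i ⬝ᵥ x ℓ) with hc
  -- Si is symmetric
  have hSiH : (Si i).IsHermitian := by
    show (Si i)ᴴ = Si i
    ext a b
    rw [hSi i]
    simp only [conjTranspose_apply, of_apply, star_trivial]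
    congr 1
    exact Finset.sum_congr rfl fun ℓ _ => by ring
  have hsymm : ∀ a b, Si i a b = Si i b a := by
    intro a b
    rw [hSi i]
    simp only [of_apply]
    congr 1
    exact Finset.sum_congr rfl fun ℓ _ => by ring
  have hXv : ∀ a b, (X *ᵥ c) (a, b) = ∑ ℓ, x ℓ a * x ℓ b * c ℓ := by
    intro a b
    rw [hX]
    rfl
  have hab : ∀ a b, Si i a b = (1/(n:ℝ)) * (X *ᵥ c) (a, b) := by
    intro a b
    rw [hSi i, of_apply, hXv]
    congr 1
    exact Finset.sum_congr rfl fun ℓ _ => by simp only [hc]; ring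
  set T : ℝ := trace (Si i * Si i) with hT
  have hT1 : T = (1/(n:ℝ))^2 * (c ⬝ᵥ (Xᵀ * X) *ᵥ c) := by
    rw [← aux_dot]
    simp only [hT, trace, Matrix.diag, Matrix.mul_apply, dotProduct, Fintype.sum_prod_type]
    rw [Finset.mul_sum]
    refine Finset.sum_congr rfl fun a _ => ?_
    rw [Finset.mul_sum]
    refine Finset.sum_congr rfl fun b _ => ?_
    rw [← hsymm a b, hab a b]
    ring
  -- lower bound for quadratic form
  set M : Matrix (Fin n) (Fin n) ℝ := (1 / (d ^ 2 : ℝ)) • (Xᵀ * X) with hM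
  have hMH : M.IsHermitian := by
    show Mᴴ = M
    have h0 : (Xᵀ * X)ᴴ = Xᵀ * X := by
      ext p q
      simp only [conjTranspose_apply, Matrix.mul_apply, transpose_apply, star_trivial]
      exact Finset.sum_congr rfl fun r _ => mul_comm _ _
    simp only [hM, conjTranspose_smul, star_trivial, h0]
  have m1 : lX * (c ⬝ᵥ c) ≤ c ⬝ᵥ M *ᵥ c :=
    aux_quad M hMH lX (fun μ hμ => hlX.2 hμ) c
  have m1' : c ⬝ᵥ M *ᵥ c = (1 / (d ^ 2 : ℝ)) * (c ⬝ᵥ (Xᵀ * X) *ᵥ c) := by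
    simp only [hM, smul_mulVec, dotProduct_smul, smul_eq_mul]
  -- upper bound via eigenvalues
  have heig : ∀ j, (hSiH.eigenvalues j)^2 ≤ (ρ i)^2 := by
    intro j
    have hmem : |hSiH.eigenvalues j| ∈ {t : ℝ | ∃ (μ : ℝ) (v : Fin d → ℝ), v ≠ 0 ∧
        (Si i).mulVec v = μ • v ∧ t = |μ|} :=
      ⟨hSiH.eigenvalues j, ⇑(hSiH.eigenvectorBasis j),
        fun hcon => hSiH.eigenvectorBasis.toBasis.ne_zero j (by ext q; exact congrFun hcon q),
        by simpa using hSiH.mulVec_eigenvectorBasis j, rfl⟩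
    have hle := (hρ i).2 hmem
    nlinarith [sq_abs (hSiH.eigenvalues j), abs_nonneg (hSiH.eigenvalues j)]
  have m2 : T ≤ (d:ℝ) * (ρ i)^2 := by
    rw [hT, aux_trace (Si i) hSiH]
    calc ∑ j, (hSiH.eigenvalues j)^2 ≤ ∑ _j : Fin d, (ρ i)^2 :=
          Finset.sum_le_sum fun j _ => heig j
      _ = (d:ℝ) * (ρ i)^2 := by simp [mul_comm]
  -- lower bound on c ⬝ᵥ c
  have hccE : (w i)^2 * h^2 * E ≤ c ⬝ᵥ c := by
    rw [hE, dotProduct, Finset.mul_sum]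
    refine Finset.sum_le_sum fun ℓ _ => ?_
    have h1 := hcurv i ℓ
    have h2 : h^2 ≤ (σ'' (θ i ⬝ᵥ x ℓ))^2 := by
      nlinarith [sq_abs (σ'' (θ i ⬝ᵥ x ℓ)), abs_nonneg (σ'' (θ i ⬝ᵥ x ℓ))]
    have h3 : 0 ≤ (w i)^2 * (e ℓ)^2 := by positivity
    have : c ℓ * c ℓ = (w i)^2 * (e ℓ)^2 * (σ'' (θ i ⬝ᵥ x ℓ))^2 := by
      simp only [hc]; ring
    nlinarith [mul_le_mul_of_nonneg_left h2 h3]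
  -- combine
  have hQ : (d:ℝ)^2 * (lX * (c ⬝ᵥ c)) ≤ (n:ℝ)^2 * T := by
    have h4 : lX * (c ⬝ᵥ c) ≤ (1 / (d ^ 2 : ℝ)) * (c ⬝ᵥ (Xᵀ * X) *ᵥ c) := m1.trans_eq m1'
    have h5 : c ⬝ᵥ (Xᵀ * X) *ᵥ c = (n:ℝ)^2 * T := by
      rw [hT1]; field_simp
    have h6 := mul_le_mul_of_nonneg_left h4 (le_of_lt (pow_pos hd' 2))
    calc (d:ℝ)^2 * (lX * (c ⬝ᵥ c)) ≤ (d:ℝ)^2 * ((1 / (d ^ 2 : ℝ)) * (c ⬝ᵥ (Xᵀ * X) *ᵥ c)) := h6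
      _ = c ⬝ᵥ (Xᵀ * X) *ᵥ c := by field_simp
      _ = (n:ℝ)^2 * T := h5
  have hfin : (d:ℝ)^2 * (lX * ((w i)^2 * h^2 * E)) ≤ (n:ℝ)^2 * ((d:ℝ) * (ρ i)^2) := by
    have h7 : (d:ℝ)^2 * (lX * ((w i)^2 * h^2 * E)) ≤ (d:ℝ)^2 * (lX * (c ⬝ᵥ c)) := by
      have := mul_le_mul_of_nonneg_left hccE (le_of_lt hlXpos)
      exact mul_le_mul_of_nonneg_left this (le_of_lt (pow_pos hd' 2))
    have h8 : (n:ℝ)^2 * T ≤ (n:ℝ)^2 * ((d:ℝ) * (ρ i)^2) :=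
      mul_le_mul_of_nonneg_left m2 (sq_nonneg _)
    exact h7.trans (hQ.trans h8)
  -- final arithmetic
  have hw2 : (0:ℝ) < (w i)^2 := by positivity
  rw [div_pow, div_mul_div_comm, one_div_mul_eq_div, div_le_div_iff₀ hn' (by positivity)]
  refine le_of_mul_le_mul_right ?_ hd'
  ring_nf
  ring_nf at hfin
  linarith [hfin]
end
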